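/- arXiv:1507.00518 — 2 statements merged into one kernel-verified Lean document; each statement's English description precedes it below -/
import Mathlib

section
/- Let c > 0 and δ > 0. Then for every real ξ > 0, (1/(2πi)) ∫_{c-i∞}^{c+i∞} ((e^{δs} - 1)² / s²) ξ^s ds = min(log(e^{2δ} ξ), log(1/ξ)) if e^{-2δ} ≤ ξ ≤ 1, and equals 0 otherwise. -/
/-!
Write `s = c + iτ` and `u = log ξ`. Expanding the square, the integrand is
`(e^{(u+2δ)s} - 2e^{(u+δ)s} + e^{us}) / s²`, and for every real `a`
`∫ e^{as}/s² dτ = 2π · max a 0`: up to the factor `e^{ac}` and the substitution `τ = 2πξ`, the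
left side is the inverse Fourier transform at `a` of the Fourier transform `1/(c + 2πiξ)²` of
`t ↦ t₊ e^{-ct}`. The answer is the second difference
`max (u+2δ) 0 - 2 max (u+δ) 0 + max u 0`, the tent function of `u` supported on `[-2δ, 0]`.
-/

open Complex Real MeasureTheory Set Filter FourierTransform
open scoped Topology

theorem tendsto_pow_mul_cexp_neg_mul_atTop (n : ℕ) {z : ℂ} (hz : 0 < z.re) :
    Tendsto (fun t : ℝ => (t : ℂ) ^ n * cexp (-(z * t))) atTop (𝓝 0) := by
  rw [tendsto_zero_iff_norm_tendsto_zero]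
  refine (tendsto_rpow_mul_exp_neg_mul_atTop_nhds_zero n z.re hz).congr' ?_
  filter_upwards [eventually_ge_atTop 0] with t ht
  simp [Complex.norm_exp, abs_of_nonneg ht]

theorem integrableOn_mul_cexp_neg_mul_Ioi {z : ℂ} (hz : 0 < z.re) :
    IntegrableOn (fun t : ℝ => (t : ℂ) * cexp (-(z * t))) (Ioi 0) := by
  have hreal : IntegrableOn (fun t : ℝ => t * Real.exp (-(z.re * t))) (Ioi 0) := by
    simpa using
      integrableOn_rpow_mul_exp_neg_mul_rpow (s := 1) (p := 1) (by norm_num) zero_lt_one hz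
  refine hreal.mono' (by fun_prop) ?_
  filter_upwards [ae_restrict_mem measurableSet_Ioi] with t ht
  simp [Complex.norm_exp, abs_of_pos (show (0 : ℝ) < t from ht)]

theorem integral_mul_cexp_neg_mul_Ioi {z : ℂ} (hz : 0 < z.re) :
    ∫ t in Ioi (0 : ℝ), (t : ℂ) * cexp (-(z * t)) = 1 / z ^ 2 := by
  have hz0 : z ≠ 0 := by rintro rfl; simp at hz
  let F : ℝ → ℂ := fun t => -((t : ℂ) / z + 1 / z ^ 2) * cexp (-(z * t))
  have hderiv (t : ℝ) : HasDerivAt F ((t : ℂ) * cexp (-(z * t))) t := by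
    have hF : HasDerivAt (fun w : ℂ => -(w / z + 1 / z ^ 2) * cexp (-(z * w)))
        (-(1 / z) * cexp (-(z * t)) + -((t : ℂ) / z + 1 / z ^ 2) * (-z * cexp (-(z * t)))) t := by
      refine (((hasDerivAt_id _).div_const z).add_const _).neg.mul ?_
      simpa [mul_comm] using ((hasDerivAt_id (t : ℂ)).const_mul z).neg.cexp
    convert hF.comp_ofReal using 1
    field_simp
    ring
  have hlim : Tendsto F atTop (𝓝 0) := by
    have h := (((tendsto_pow_mul_cexp_neg_mul_atTop 1 hz).const_mul z⁻¹).add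
      ((tendsto_pow_mul_cexp_neg_mul_atTop 0 hz).const_mul (z ^ 2)⁻¹)).neg
    simp only [mul_zero, add_zero, neg_zero] at h
    refine h.congr fun t => ?_
    simp only [F]
    ring
  rw [integral_Ioi_of_hasDerivAt_of_tendsto' (fun t _ => hderiv t)
    (integrableOn_mul_cexp_neg_mul_Ioi hz) hlim]
  simp [F]

noncomputable def rampExp (c : ℝ) (t : ℝ) : ℂ := ((max t 0 : ℝ) : ℂ) * cexp (-(c * t))

theorem rampExp_eq_indicator (c : ℝ) :
    rampExp c = (Ioi 0).indicator fun t : ℝ => (t : ℂ) * cexp (-(c * t)) := by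
  ext t
  rcases lt_or_ge 0 t with ht | ht
  · simp [rampExp, ht, ht.le]
  · simp [rampExp, ht, not_lt.2 ht]

theorem continuous_rampExp (c : ℝ) : Continuous (rampExp c) := by
  unfold rampExp; fun_prop

theorem integrable_rampExp {c : ℝ} (hc : 0 < c) : Integrable (rampExp c) := by
  rw [rampExp_eq_indicator, integrable_indicator_iff measurableSet_Ioi]
  exact integrableOn_mul_cexp_neg_mul_Ioi (by simpa using hc)

theorem fourier_rampExp {c : ℝ} (hc : 0 < c) (ξ : ℝ) :
    𝓕 (rampExp c) ξ = 1 / (c + 2 * π * ξ * I) ^ 2 := by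
  have hmod (t : ℝ) : cexp (↑(-2 * π * t * ξ) * I) • rampExp c t =
      (Ioi 0).indicator (fun t : ℝ => (t : ℂ) * cexp (-((c + 2 * π * ξ * I) * t))) t := by
    rw [rampExp_eq_indicator]
    by_cases ht : t ∈ Ioi 0
    · rw [indicator_of_mem ht, indicator_of_mem ht, smul_eq_mul, mul_left_comm, ← Complex.exp_add]
      push_cast
      ring_nf
    · simp [ht]
  rw [Real.fourier_real_eq_integral_exp_smul, integral_congr_ae (.of_forall hmod),
    integral_indicator measurableSet_Ioi]
  exact integral_mul_cexp_neg_mul_Ioi (by simpa using hc)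

theorem integrable_inv_ofReal_add_mul_I_sq {c : ℝ} (hc : c ≠ 0) :
    Integrable fun τ : ℝ => ((c + τ * I) ^ 2)⁻¹ := by
  have hnorm (τ : ℝ) : ‖((c + τ * I) ^ 2)⁻¹‖ = (c ^ 2)⁻¹ * (1 + (c⁻¹ * τ) ^ 2)⁻¹ := by
    rw [norm_inv, norm_pow, ← Complex.normSq_eq_norm_sq, Complex.normSq_add_mul_I]
    field_simp
  refine (integrable_norm_iff (by fun_prop)).1 ?_
  simp_rw [hnorm]
  exact (integrable_inv_one_add_sq.comp_mul_left' (inv_ne_zero hc)).const_mul _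

theorem integrable_fourier_rampExp {c : ℝ} (hc : 0 < c) : Integrable (𝓕 (rampExp c)) := by
  have h := (integrable_inv_ofReal_add_mul_I_sq hc.ne').comp_mul_left' (by positivity : 2 * π ≠ 0)
  refine h.congr (.of_forall fun ξ => ?_)
  simp [fourier_rampExp hc, mul_assoc]

theorem integrable_cexp_mul_div_sq {c : ℝ} (hc : 0 < c) (a : ℝ) :
    Integrable fun τ : ℝ => cexp (a * (c + τ * I)) / (c + τ * I) ^ 2 := by
  refine (integrable_inv_ofReal_add_mul_I_sq hc.ne').bdd_mul (c := Real.exp (a * c))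
    (by fun_prop) (.of_forall fun τ => ?_)
  simp [Complex.norm_exp]

theorem integral_cexp_mul_div_sq {c : ℝ} (hc : 0 < c) (a : ℝ) :
    ∫ τ : ℝ, cexp (a * (c + τ * I)) / (c + τ * I) ^ 2 = 2 * π * max a 0 := by
  let φ : ℝ → ℂ := fun τ => cexp (a * τ * I) / (c + τ * I) ^ 2
  have hinv : ∫ ξ : ℝ, φ (2 * π * ξ) = rampExp c a := by
    rw [← (integrable_rampExp hc).fourierInv_fourier_eq (integrable_fourier_rampExp hc)
      (continuous_rampExp c).continuousAt, Real.fourierInv_eq_fourier_neg,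
      Real.fourier_real_eq_integral_exp_smul]
    congr 1 with ξ
    rw [fourier_rampExp hc, smul_eq_mul, mul_one_div]
    simp only [φ]
    push_cast
    ring_nf
  have hscale : ∫ τ : ℝ, φ τ = 2 * π * rampExp c a := by
    rw [← hinv, Measure.integral_comp_mul_left, abs_of_pos (by positivity), Complex.real_smul]
    push_cast
    field_simp
  calc ∫ τ : ℝ, cexp (a * (c + τ * I)) / (c + τ * I) ^ 2
      = ∫ τ : ℝ, cexp (a * c) * φ τ := by
        congr 1 with τ
        rw [mul_div_assoc', ← Complex.exp_add, mul_add, mul_assoc]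
    _ = 2 * π * max a 0 := by
        have hcancel : cexp (a * c) * cexp (-(c * a)) = 1 := by
          rw [← Complex.exp_add, mul_comm, add_neg_cancel, Complex.exp_zero]
        rw [integral_const_mul, hscale, rampExp]
        linear_combination (2 * π * (max a 0 : ℝ) : ℂ) * hcancel

theorem second_difference_posPart_eq_ite {δ : ℝ} (hδ : 0 ≤ δ) (u : ℝ) :
    max (u + 2 * δ) 0 - 2 * max (u + δ) 0 + max u 0 =
      if -(2 * δ) ≤ u ∧ u ≤ 0 then min (u + 2 * δ) (-u) else 0 := by
  split_ifs with h
  · simp only [max_def, min_def]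
    split_ifs <;> linarith [h.1, h.2]
  · rcases not_and_or.1 h with h | h <;> simp only [max_def] <;> split_ifs <;> linarith

theorem sq_cexp_mul_sub_one_mul_cpow (δ : ℂ) {ξ : ℝ} (hξ : 0 < ξ) (s : ℂ) :
    (cexp (δ * s) - 1) ^ 2 * (ξ : ℂ) ^ s =
      cexp ((Real.log ξ + 2 * δ) * s) - 2 * cexp ((Real.log ξ + δ) * s) +
        cexp (Real.log ξ * s) := by
  rw [Complex.cpow_def_of_ne_zero (by exact_mod_cast hξ.ne'), ← Complex.ofReal_log hξ.le]
  simp only [add_mul, Complex.exp_add, two_mul]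
  ring

/-- The contour integral is parametrized by `s = c + iτ`, so that `ds = i dτ` and the prefactor
`1/(2πi)` becomes `1/(2π)`. -/
theorem soundararajan_device (c δ ξ : ℝ) (hc : 0 < c) (hδ : 0 < δ) (hξ : 0 < ξ) :
    (1 / (2 * Real.pi)) •
        ∫ τ : ℝ, (Complex.exp (δ * (c + τ * Complex.I)) - 1) ^ 2 / (c + τ * Complex.I) ^ 2 *
          (ξ : ℂ) ^ ((c : ℂ) + τ * Complex.I)
      = if Real.exp (-2 * δ) ≤ ξ ∧ ξ ≤ 1 then
          ((min (Real.log (Real.exp (2 * δ) * ξ)) (Real.log (1 / ξ)) : ℝ) : ℂ)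
        else 0 := by
  set u := Real.log ξ
  have hI (a : ℝ) := integrable_cexp_mul_div_sq hc a
  have hexpand (τ : ℝ) :
      (cexp (δ * (c + τ * I)) - 1) ^ 2 / (c + τ * I) ^ 2 * (ξ : ℂ) ^ ((c : ℂ) + τ * I) =
      cexp ((u + 2 * δ : ℝ) * (c + τ * I)) / (c + τ * I) ^ 2
        - 2 * (cexp ((u + δ : ℝ) * (c + τ * I)) / (c + τ * I) ^ 2)
        + cexp (u * (c + τ * I)) / (c + τ * I) ^ 2 := by
    rw [div_mul_eq_mul_div, sq_cexp_mul_sub_one_mul_cpow _ hξ]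
    push_cast
    ring
  have hcond : Real.exp (-2 * δ) ≤ ξ ∧ ξ ≤ 1 ↔ -(2 * δ) ≤ u ∧ u ≤ 0 := by
    rw [← Real.log_nonpos_iff hξ.le, Real.le_log_iff_exp_le hξ, neg_mul]
  have hlog : Real.log (Real.exp (2 * δ) * ξ) = u + 2 * δ ∧ Real.log (1 / ξ) = -u := by
    rw [Real.log_mul (Real.exp_ne_zero _) hξ.ne', Real.log_exp, one_div, Real.log_inv, add_comm]
    exact ⟨rfl, rfl⟩
  simp_rw [hexpand]
  rw [integral_add (by exact (hI _).sub ((hI _).const_mul 2)) (hI _),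
    integral_sub (hI _) ((hI _).const_mul 2), integral_const_mul, integral_cexp_mul_div_sq hc,
    integral_cexp_mul_div_sq hc, integral_cexp_mul_div_sq hc, hlog.1, hlog.2,
    if_congr hcond rfl rfl, ← Complex.ofReal_zero, ← apply_ite,
    ← second_difference_posPart_eq_ite hδ.le u, Complex.real_smul]
  push_cast
  field_simp
end

section
/- Let (c_n)_{n≥1} be nonnegative reals with ∑_{n ≤ x} c_n = r·x + O(x^{β}) for some r > 0 and β < 1. Write each n uniquely as n = t m² with t squarefree, and suppose c_{t m²} ≤ K · c_t · τ(m)² ψ(m)² for all squarefree t and all m. Then ∑_{t ≤ x, t squarefree} c_t ≍ x as x → ∞. -/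
open Finset Real
open scoped Classical

/-- ψ(n) = ∏_{p ∣ n prime} (1 + p^{-1/2}) -/
noncomputable def psi (n : ℕ) : ℝ := ∏ p ∈ n.primeFactors, (1 + (p : ℝ) ^ (-(1/2 : ℝ)))

/-!
Write `w(m) = τ(m)² ψ(m)²`. Since `ψ ≤ τ` and `τ(m) ≪ m^{1/8}`, the series `∑ w(m) / m²`
converges. Every `n` is `t m²` with `t` squarefree, so
`∑_{n ≤ x} c_n ≤ K ∑_m w(m) ∑_{t ≤ x/m², t squarefree} c_t`.
For `m > M` the inner sum is at most `∑_{n ≤ x/m²} c_n ≪ x / m²`, so these terms contribute at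
most `ε x` once `M` is large; for `m ≤ M` it is at most the full squarefree sum up to `x`.
As `∑_{n ≤ x} c_n ≥ r x / 2` for large `x`, the squarefree sum is `≫ x`; the upper bound is trivial.
-/

lemma add_one_le_mul_two_rpow_div (a : ℕ) {k : ℕ} (hk : 0 < k) :
    (a + 1 : ℝ) ≤ k * 2 ^ ((a : ℝ) / k) := by
  have hq : a + 1 ≤ k * (a / k + 1) := by
    have := Nat.lt_div_mul_add (a := a) hk
    nlinarith
  have hpow : ((a / k : ℕ) : ℝ) + 1 ≤ 2 ^ ((a : ℝ) / k) := calc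
    ((a / k : ℕ) : ℝ) + 1 ≤ 2 ^ (a / k) := by exact_mod_cast Nat.lt_two_pow_self
    _ = 2 ^ ((a / k : ℕ) : ℝ) := (rpow_natCast 2 _).symm
    _ ≤ 2 ^ ((a : ℝ) / k) := rpow_le_rpow_of_exponent_le one_le_two Nat.cast_div_le
  calc (a + 1 : ℝ) ≤ k * ((a / k : ℕ) + 1 : ℝ) := by exact_mod_cast hq
    _ ≤ k * 2 ^ ((a : ℝ) / k) := by gcongr

lemma add_one_le_prime_pow_rpow {p : ℕ} (hp : p.Prime) (a : ℕ) {k : ℕ} (hk : 0 < k) :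
    (a + 1 : ℝ) ≤ (if p < 2 ^ k then (k : ℝ) else 1) * ((p : ℝ) ^ a) ^ (1 / k : ℝ) := by
  split_ifs with hsmall
  · calc (a + 1 : ℝ) ≤ k * 2 ^ ((a : ℝ) / k) := add_one_le_mul_two_rpow_div a hk
      _ ≤ k * ((p : ℝ) ^ a) ^ (1 / k : ℝ) := by
        rw [← rpow_natCast, ← rpow_mul (by positivity), mul_one_div]
        gcongr
        exact_mod_cast hp.two_le
  · have hbig : ((2 : ℝ) ^ k) ^ a ≤ (p : ℝ) ^ a := by
      gcongr
      exact_mod_cast not_lt.mp hsmall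
    calc (a + 1 : ℝ) ≤ 2 ^ a := by exact_mod_cast Nat.lt_two_pow_self
      _ = (((2 : ℝ) ^ k) ^ a) ^ (1 / k : ℝ) := by
        rw [← pow_mul, mul_comm, pow_mul, ← rpow_natCast (2 ^ a : ℝ) k, ← rpow_mul (by positivity)]
        field_simp
        simp
      _ ≤ 1 * ((p : ℝ) ^ a) ^ (1 / k : ℝ) := by
        rw [one_mul]
        gcongr

theorem card_divisors_le_mul_rpow {k : ℕ} (hk : 0 < k) {n : ℕ} (hn : n ≠ 0) :
    (n.divisors.card : ℝ) ≤ k ^ 2 ^ k * (n : ℝ) ^ (1 / k : ℝ) := by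
  have hsmall : ∏ p ∈ n.primeFactors, (if p < 2 ^ k then (k : ℝ) else 1) ≤ k ^ 2 ^ k := by
    rw [prod_ite, prod_const, prod_const_one, mul_one]
    refine pow_le_pow_right₀ (by exact_mod_cast hk) ?_
    calc #(n.primeFactors.filter (· < 2 ^ k)) ≤ #(range (2 ^ k)) :=
          card_le_card fun p hp => mem_range.mpr (mem_filter.mp hp).2
      _ = 2 ^ k := card_range _
  have hroot : ∏ p ∈ n.primeFactors, ((p : ℝ) ^ n.factorization p) ^ (1 / k : ℝ)
      = (n : ℝ) ^ (1 / k : ℝ) := by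
    rw [finsetProd_rpow _ _ fun p _ => by positivity]
    congr 1
    exact_mod_cast Nat.prod_factorization_pow_eq_self hn
  calc (n.divisors.card : ℝ) = ∏ p ∈ n.primeFactors, ((n.factorization p : ℝ) + 1) := by
        rw [Nat.card_divisors hn]; push_cast; rfl
    _ ≤ ∏ p ∈ n.primeFactors, ((if p < 2 ^ k then (k : ℝ) else 1) *
          ((p : ℝ) ^ n.factorization p) ^ (1 / k : ℝ)) :=
        prod_le_prod (fun _ _ => by positivity)
          fun p hp => add_one_le_prime_pow_rpow (Nat.prime_of_mem_primeFactors hp) _ hk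
    _ ≤ k ^ 2 ^ k * (n : ℝ) ^ (1 / k : ℝ) := by
        rw [prod_mul_distrib, hroot]
        gcongr

lemma psi_le_card_divisors {m : ℕ} (hm : m ≠ 0) : psi m ≤ m.divisors.card := by
  rw [Nat.card_divisors hm]
  push_cast
  refine prod_le_prod (fun _ _ => by positivity) fun p hp => ?_
  have hp' := Nat.prime_of_mem_primeFactors hp
  have h1 : (p : ℝ) ^ (-(1 / 2) : ℝ) ≤ 1 :=
    rpow_le_one_of_one_le_of_nonpos (by exact_mod_cast hp'.one_lt.le) (by norm_num)
  have h2 : (1 : ℝ) ≤ m.factorization p := by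
    exact_mod_cast hp'.factorization_pos_of_dvd hm (Nat.dvd_of_mem_primeFactors hp)
  linarith

noncomputable def divisorWeight (m : ℕ) : ℝ := (m.divisors.card : ℝ) ^ 2 * psi m ^ 2

lemma divisorWeight_nonneg (m : ℕ) : 0 ≤ divisorWeight m := by
  unfold divisorWeight; positivity

lemma divisorWeight_div_sq_le (m : ℕ) :
    divisorWeight m / (m : ℝ) ^ 2 ≤ ((8 : ℝ) ^ 2 ^ 8) ^ 4 * (m : ℝ) ^ (-(3 / 2) : ℝ) := by
  rcases eq_or_ne m 0 with rfl | hm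
  · simp
  have hψ : psi m ^ 2 ≤ (m.divisors.card : ℝ) ^ 2 :=
    pow_le_pow_left₀ (prod_nonneg fun _ _ => by positivity) (psi_le_card_divisors hm) 2
  have hm0 : (0 : ℝ) < m := by positivity
  calc divisorWeight m / (m : ℝ) ^ 2 ≤ (m.divisors.card : ℝ) ^ 4 / (m : ℝ) ^ 2 := by
        unfold divisorWeight
        gcongr
        nlinarith [sq_nonneg (m.divisors.card : ℝ)]
    _ ≤ ((8 : ℝ) ^ 2 ^ 8 * (m : ℝ) ^ (1 / 8 : ℝ)) ^ 4 / (m : ℝ) ^ 2 := by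
        gcongr
        exact_mod_cast card_divisors_le_mul_rpow (by norm_num : 0 < 8) hm
    _ = ((8 : ℝ) ^ 2 ^ 8) ^ 4 * (m : ℝ) ^ (-(3 / 2) : ℝ) := by
        rw [mul_pow, ← rpow_natCast ((m : ℝ) ^ _), ← rpow_mul hm0.le, ← rpow_natCast (m : ℝ) 2,
          mul_div_assoc, ← rpow_sub hm0]
        norm_num

lemma summable_divisorWeight_div_sq : Summable fun m : ℕ => divisorWeight m / (m : ℝ) ^ 2 :=
  .of_nonneg_of_le (fun m => div_nonneg (divisorWeight_nonneg m) (by positivity))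
    divisorWeight_div_sq_le ((Real.summable_nat_rpow.mpr (by norm_num)).mul_left _)

lemma Summable.exists_forall_sum_Ioc_le {f : ℕ → ℝ} (hf : Summable f) {ε : ℝ} (hε : 0 < ε) :
    ∃ M, ∀ N, ∑ m ∈ Ioc M N, f m ≤ ε := by
  obtain ⟨s, hs⟩ := hf.vanishing (Iic_mem_nhds hε)
  refine ⟨s.sup id, fun N => hs _ (disjoint_left.mpr fun m hm hms => ?_)⟩
  exact (mem_Ioc.mp hm).1.not_ge (le_sup (f := id) hms)

lemma sum_Icc_le_sum_sum_squarefree_mul_sq {M : Type*} [AddCommMonoid M] [PartialOrder M]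
    [IsOrderedAddMonoid M] {f : ℕ → M} (hf : ∀ n, 0 ≤ f n) (N : ℕ) :
    ∑ n ∈ Icc 1 N, f n ≤
      ∑ m ∈ Icc 1 N, ∑ t ∈ (Icc 1 (N / m ^ 2)).filter (fun t => Squarefree t), f (t * m ^ 2) := by
  have hmaps : ∀ x ∈ (Icc 1 N).sigma fun m => (Icc 1 (N / m ^ 2)).filter (fun t => Squarefree t),
      x.2 * x.1 ^ 2 ∈ Icc 1 N := by
    rintro ⟨m, t⟩ hx
    simp only [mem_sigma, mem_filter, mem_Icc] at hx ⊢
    have hm2 : 0 < m ^ 2 := pow_pos hx.1.1 2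
    exact ⟨Nat.mul_pos hx.2.1.1 hm2, (Nat.le_div_iff_mul_le hm2).mp hx.2.1.2⟩
  rw [sum_sigma', ← sum_fiberwise_of_maps_to hmaps]
  refine sum_le_sum fun n hn => ?_
  obtain ⟨t, m, rfl, ht⟩ := Nat.sq_mul_squarefree n
  rw [mem_Icc] at hn
  have hm : 0 < m := Nat.pos_of_ne_zero (by rintro rfl; simp at hn)
  have htm : 0 < t := Nat.pos_of_ne_zero (by rintro rfl; simp at hn)
  refine (single_le_sum (f := fun x : Σ _ : ℕ, ℕ => f (x.2 * x.1 ^ 2)) (fun _ _ => hf _)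
    (a := ⟨m, t⟩) ?_).trans_eq' (by rw [mul_comm])
  simp only [mem_filter, mem_sigma, mem_Icc]
  refine ⟨⟨⟨hm, ?_⟩, ⟨htm, ?_⟩, ht⟩, mul_comm _ _⟩
  · nlinarith [Nat.le_self_pow two_ne_zero m]
  · exact (Nat.le_div_iff_mul_le (by positivity)).mpr (by rw [mul_comm]; exact hn.2)

lemma sum_Icc_le_mul_of_abs_sub_le {c : ℕ → ℝ} {r β C : ℝ} (hβ : β ≤ 1)
    (hC : ∀ x : ℝ, 1 ≤ x → |(∑ n ∈ Icc 1 ⌊x⌋₊, c n) - r * x| ≤ C * x ^ β) (N : ℕ) :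
    ∑ n ∈ Icc 1 N, c n ≤ (r + |C|) * N := by
  rcases N.eq_zero_or_pos with rfl | hN
  · simp
  have hx : (1 : ℝ) ≤ N := by exact_mod_cast hN
  have hCN : C * (N : ℝ) ^ β ≤ |C| * N := calc
    C * (N : ℝ) ^ β ≤ |C| * (N : ℝ) ^ β := by gcongr; exact le_abs_self C
    _ ≤ |C| * N := by gcongr; simpa using rpow_le_rpow_of_exponent_le hx hβ
  have := (abs_le.mp (hC N hx)).2
  rw [Nat.floor_natCast] at this
  linarith

lemma eventually_mul_rpow_le_mul (C : ℝ) {β ε : ℝ} (hβ : β < 1) (hε : 0 < ε) :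
    ∀ᶠ x : ℝ in Filter.atTop, C * x ^ β ≤ ε * x := by
  filter_upwards [(tendsto_rpow_atTop (sub_pos.mpr hβ)).eventually_ge_atTop (|C| / ε),
    Filter.eventually_gt_atTop 0] with x hx hx0
  calc C * x ^ β ≤ |C| * x ^ β := by gcongr; exact le_abs_self C
    _ ≤ ε * x ^ (1 - β) * x ^ β := by gcongr; rwa [div_le_iff₀' hε] at hx
    _ = ε * x := by rw [mul_assoc, ← rpow_add hx0, sub_add_cancel, rpow_one]

noncomputable def squarefreeSum (c : ℕ → ℝ) (N : ℕ) : ℝ :=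
  ∑ t ∈ (Icc 1 N).filter (fun t => Squarefree t), c t

section squarefreeSum

variable {c : ℕ → ℝ} (hc : ∀ n, 0 ≤ c n)
include hc

lemma squarefreeSum_nonneg (N : ℕ) : 0 ≤ squarefreeSum c N :=
  sum_nonneg fun t _ => hc t

lemma squarefreeSum_le_sum (N : ℕ) : squarefreeSum c N ≤ ∑ n ∈ Icc 1 N, c n :=
  sum_le_sum_of_subset_of_nonneg (filter_subset _ _) fun n _ _ => hc n

lemma squarefreeSum_mono : Monotone (squarefreeSum c) := fun _ _ h =>
  sum_le_sum_of_subset_of_nonneg (filter_subset_filter _ (Icc_subset_Icc_right h))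
    fun n _ _ => hc n

variable {K : ℝ} (hmult : ∀ t m : ℕ, Squarefree t → 0 < m →
  c (t * m ^ 2) ≤ K * c t * (m.divisors.card : ℝ) ^ 2 * psi m ^ 2)
include hmult

lemma sum_Icc_le_sum_divisorWeight_mul_squarefreeSum (N : ℕ) :
    ∑ n ∈ Icc 1 N, c n ≤ ∑ m ∈ Icc 1 N, K * divisorWeight m * squarefreeSum c (N / m ^ 2) := by
  refine (sum_Icc_le_sum_sum_squarefree_mul_sq hc N).trans (sum_le_sum fun m hm => ?_)
  rw [squarefreeSum, mul_sum]
  refine sum_le_sum fun t ht => ?_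
  calc c (t * m ^ 2) ≤ K * c t * (m.divisors.card : ℝ) ^ 2 * psi m ^ 2 :=
        hmult t m (mem_filter.mp ht).2 (mem_Icc.mp hm).1
    _ = K * divisorWeight m * c t := by rw [divisorWeight]; ring

lemma sum_Icc_le_squarefreeSum_add_tail {A : ℝ} (hK : 0 ≤ K) (hA : 0 ≤ A)
    (hlin : ∀ N : ℕ, ∑ n ∈ Icc 1 N, c n ≤ A * N) (M N : ℕ) :
    ∑ n ∈ Icc 1 N, c n ≤ K * (∑ m ∈ Icc 1 M, divisorWeight m) * squarefreeSum c N +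
      K * A * N * ∑ m ∈ Ioc M N, divisorWeight m / (m : ℝ) ^ 2 := by
  have hw := divisorWeight_nonneg
  refine (sum_Icc_le_sum_divisorWeight_mul_squarefreeSum hc hmult N).trans ?_
  rw [← sum_filter_add_sum_filter_not _ (· ≤ M), mul_sum, sum_mul, mul_sum]
  refine add_le_add ?_ ?_
  · calc ∑ m ∈ (Icc 1 N).filter (· ≤ M), K * divisorWeight m * squarefreeSum c (N / m ^ 2)
        ≤ ∑ m ∈ (Icc 1 N).filter (· ≤ M), K * divisorWeight m * squarefreeSum c N := by
          gcongr with m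
          · exact mul_nonneg hK (hw m)
          · exact squarefreeSum_mono hc (Nat.div_le_self N _)
      _ ≤ ∑ m ∈ Icc 1 M, K * divisorWeight m * squarefreeSum c N := by
          refine sum_le_sum_of_subset_of_nonneg (fun m hm => ?_) fun m _ _ =>
            mul_nonneg (mul_nonneg hK (hw m)) (squarefreeSum_nonneg hc N)
          simp only [mem_filter, mem_Icc] at hm ⊢
          exact ⟨hm.1.1, hm.2⟩
  · calc ∑ m ∈ (Icc 1 N).filter (¬ · ≤ M), K * divisorWeight m * squarefreeSum c (N / m ^ 2)
        ≤ ∑ m ∈ (Icc 1 N).filter (¬ · ≤ M), K * A * N * (divisorWeight m / (m : ℝ) ^ 2) := by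
          refine sum_le_sum fun m hm => ?_
          have hm0 : (0 : ℝ) < m ^ 2 := by
            have : (1 : ℝ) ≤ m := by exact_mod_cast (mem_Icc.mp (mem_filter.mp hm).1).1
            positivity
          calc K * divisorWeight m * squarefreeSum c (N / m ^ 2)
              ≤ K * divisorWeight m * (A * (N / m ^ 2 : ℕ)) := by
                gcongr
                · exact mul_nonneg hK (hw m)
                · exact (squarefreeSum_le_sum hc _).trans (hlin _)
            _ ≤ K * divisorWeight m * (A * (N / m ^ 2 : ℝ)) := by
                gcongr
                · exact mul_nonneg hK (hw m)
                · exact_mod_cast Nat.cast_div_le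
            _ = K * A * N * (divisorWeight m / (m : ℝ) ^ 2) := by
                field_simp
      _ ≤ ∑ m ∈ Ioc M N, K * A * N * (divisorWeight m / (m : ℝ) ^ 2) := by
          refine sum_le_sum_of_subset_of_nonneg (fun m hm => ?_) fun m _ _ => by
            have := hw m; positivity
          simp only [mem_filter, mem_Icc, mem_Ioc] at hm ⊢
          omega

theorem exists_sum_Icc_le_mul_squarefreeSum_add {A : ℝ} (hK : 0 ≤ K) (hA : 0 ≤ A)
    (hlin : ∀ N : ℕ, ∑ n ∈ Icc 1 N, c n ≤ A * N) {ε : ℝ} (hε : 0 < ε) :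
    ∃ H, 0 ≤ H ∧ ∀ N : ℕ, ∑ n ∈ Icc 1 N, c n ≤ H * squarefreeSum c N + ε * N := by
  obtain ⟨M, hM⟩ := summable_divisorWeight_div_sq.exists_forall_sum_Ioc_le
    (by positivity : 0 < ε / (K * A + 1))
  refine ⟨K * ∑ m ∈ Icc 1 M, divisorWeight m,
    mul_nonneg hK (sum_nonneg fun m _ => divisorWeight_nonneg m), fun N => ?_⟩
  refine (sum_Icc_le_squarefreeSum_add_tail hc hmult hK hA hlin M N).trans (add_le_add_right ?_ _)
  calc K * A * N * ∑ m ∈ Ioc M N, divisorWeight m / (m : ℝ) ^ 2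
      ≤ K * A * N * (ε / (K * A + 1)) := by gcongr; exact hM N
    _ = K * A / (K * A + 1) * (ε * N) := by ring
    _ ≤ ε * N := by
        refine mul_le_of_le_one_left (by positivity) ?_
        rw [div_le_one (by positivity)]
        linarith

end squarefreeSum

theorem squarefree_sum_asymp (c : ℕ → ℝ) (r β K : ℝ)
    (hc : ∀ n, 0 ≤ c n) (hr : 0 < r) (hβ : β < 1) (hK : 0 < K)
    (hasymp : ∃ C : ℝ, ∀ x : ℝ, 1 ≤ x →
      |(∑ n ∈ Finset.Icc 1 ⌊x⌋₊, c n) - r * x| ≤ C * x ^ β)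
    (hmult : ∀ t m : ℕ, Squarefree t → 0 < m →
      c (t * m ^ 2) ≤ K * c t * (m.divisors.card : ℝ) ^ 2 * psi m ^ 2) :
    ∃ c₁ c₂ : ℝ, 0 < c₁ ∧ 0 < c₂ ∧ ∃ x₀ : ℝ, ∀ x : ℝ, x₀ ≤ x →
      c₁ * x ≤ ∑ t ∈ (Finset.Icc 1 ⌊x⌋₊).filter (fun t => Squarefree t), c t ∧
      ∑ t ∈ (Finset.Icc 1 ⌊x⌋₊).filter (fun t => Squarefree t), c t ≤ c₂ * x := by
  obtain ⟨C, hC⟩ := hasymp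
  have hA : 0 < r + |C| := by positivity
  have hlin := sum_Icc_le_mul_of_abs_sub_le hβ.le hC
  obtain ⟨H, hH, hsplit⟩ :=
    exists_sum_Icc_le_mul_squarefreeSum_add hc hmult hK.le hA.le hlin (by positivity : 0 < r / 4)
  refine ⟨r / (2 * (H + 1)), r + |C|, by positivity, hA, Filter.eventually_atTop.mp ?_⟩
  filter_upwards [eventually_mul_rpow_le_mul C hβ (by positivity : 0 < r / 4),
    Filter.eventually_ge_atTop 1] with x hCx hx
  have hN : (⌊x⌋₊ : ℝ) ≤ x := Nat.floor_le (by linarith)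
  refine ⟨?_, (squarefreeSum_le_sum hc _).trans ((hlin _).trans (by gcongr))⟩
  have hlower := (abs_le.mp (hC x hx)).1
  have hsplitx := hsplit ⌊x⌋₊
  have hQ := squarefreeSum_nonneg hc ⌊x⌋₊
  rw [div_mul_eq_mul_div, div_le_iff₀ (by positivity)]
  change _ ≤ squarefreeSum c ⌊x⌋₊ * _
  nlinarith
end
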